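/- Let K ⊂ ℝ^d be a convex body. Then there are constants τ(K) > 0 and λ(K) > 0 such that for all λ ≥ λ(K): W(λK) − E[W((λK)_L)] ≤ 2τ(K), where the expectation is over a uniform random lattice L, and moreover the bound W(λK) − W((λK)_L) ≤ 2τ(K) holds for every individual lattice L = ρ(ℤ^d + s). -/

import Mathlib

/- Setting: `ℝ^d` with randomized integer lattices `ρ(ℤ^d + t)`, `ρ ∈ SO(d)` Haar
distributed, `t` uniform on `[0,1)^d`. -/

open MeasureTheory Metric Set Matrix Filter
open scoped Pointwise RealInnerProductSpace ENNReal NNReal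

noncomputable section

abbrev Ed (d : ℕ) : Type := EuclideanSpace ℝ (Fin d)

abbrev Mat (d : ℕ) : Type := Matrix (Fin d) (Fin d) ℝ

instance (d : ℕ) : MeasurableSpace (Mat d) :=
  inferInstanceAs (MeasurableSpace (Fin d → Fin d → ℝ))

/-- The set of special orthogonal `d × d` matrices (the rotation group `SO(d)`). -/
def SOd (d : ℕ) : Set (Mat d) := {A | A * Aᵀ = 1 ∧ A.det = 1}

/-- Reinterpret a plain vector as a point of Euclidean space. -/
def toEd (d : ℕ) (v : Fin d → ℝ) : Ed d := WithLp.toLp 2 v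

/-- The rotated and shifted integer lattice `ρ(ℤ^d + t) = {ρ(ω + t) : ω ∈ ℤ^d}`. -/
def lat (d : ℕ) (ρ : Mat d) (t : Ed d) : Set (Ed d) :=
  {x | ∃ ω : Fin d → ℤ, x = toEd d (ρ.mulVec fun j => (ω j : ℝ) + t j)}

/-- The half-open unit cube `[0,1)^d`. -/
def cube (d : ℕ) : Set (Ed d) := {t | ∀ i, 0 ≤ t i ∧ t i < 1}

/-- `μ` is the Haar probability measure on `SO(d)`, viewed as a measure on the
space of `d × d` matrices concentrated on the special orthogonal matrices and
invariant under left translation by rotations. -/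
def IsHaarSO (d : ℕ) (μ : Measure (Mat d)) : Prop :=
  IsProbabilityMeasure μ ∧ μ (SOd d)ᶜ = 0 ∧
    ∀ A ∈ SOd d, ∀ S : Set (Mat d), MeasurableSet S → μ ((A * ·) ⁻¹' S) = μ S

/-- The joint distribution of the parameters `(ρ, t)` of a uniform random lattice:
`ρ` is Haar distributed on `SO(d)` and `t` is uniform on `[0,1)^d`, independently. -/
def latticeParamMeasure (d : ℕ) (μ : Measure (Mat d)) : Measure (Mat d × Ed d) :=
  μ.prod (volume.restrict (cube d))

/-- The probability `P(A ∩ L = ∅)` that a uniform random lattice avoids the set `A`. -/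
def probAvoid (d : ℕ) (μ : Measure (Mat d)) (A : Set (Ed d)) : ℝ≥0∞ :=
  latticeParamMeasure d μ {p | A ∩ lat d p.1 p.2 = ∅}

/-- The support function `h_K(u) = sup {⟨x,u⟩ : x ∈ K}`. -/
def suppFn (d : ℕ) (K : Set (Ed d)) (u : Ed d) : ℝ :=
  sSup ((fun x => ⟪x, u⟫) '' K)

/-- The spherical Lebesgue (surface) measure on the unit sphere `S^{d-1}`. -/
def sphereμ (d : ℕ) : Measure (sphere (0 : Ed d) 1) :=
  (volume : Measure (Ed d)).toSphere

/-- `ω_d`, the total surface measure of the unit sphere. -/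
def ωd (d : ℕ) : ℝ := (sphereμ d univ).toReal

/-- The mean width `W(K) = (2/ω_d) ∫_{S^{d-1}} h_K(u) du`. -/
def meanWidth (d : ℕ) (K : Set (Ed d)) : ℝ :=
  (2 / ωd d) * ∫ u : sphere (0 : Ed d) 1, suppFn d K (↑u) ∂(sphereμ d)

/-- The expected mean width `E[W(K_L)]` of the randomized integer convex hull
`K_L = conv(K ∩ L)` over a uniform random lattice `L`. -/
def expMeanWidthHull (d : ℕ) (μ : Measure (Mat d)) (K : Set (Ed d)) : ℝ :=
  ∫ p, meanWidth d (convexHull ℝ (K ∩ lat d p.1 p.2)) ∂(latticeParamMeasure d μ)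

/-- The cap `K_{t,u} = {x ∈ K : ⟨x,u⟩ ≥ h_K(u) - t}` of `K` of width `t` in direction `u`. -/
def cap (d : ℕ) (K : Set (Ed d)) (t : ℝ) (u : Ed d) : Set (Ed d) :=
  {x ∈ K | suppFn d K u - t ≤ ⟪x, u⟫}

/-- A convex body: a compact convex set with nonempty interior. -/
def IsConvexBody (d : ℕ) (K : Set (Ed d)) : Prop :=
  IsCompact K ∧ Convex ℝ K ∧ (interior K).Nonempty

/-
Let `B(x₀, r) ⊆ K ⊆ B(0, R)`. Every lattice `ρ(ℤ^d + s)` has covering radius at most `√d / 2`,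
so it meets `λK` once `λr ≥ √d / 2`. Given a direction `u` and `x ∈ λK`, push `x` toward the
centre `λx₀` by the factor `ε = √d / (2λr)`: by convexity the `√d / 2`-ball around the new point
lies in `λK`, so it contains a lattice point `z ∈ (λK)_L`, and
`⟨z, u⟩ ≥ ⟨x, u⟩ - √d / 2 - 2λRε`. Hence `h_{λK} ≤ h_{(λK)_L} + τ` with
`τ = (√d / 2)(1 + 2R / r)` on the whole sphere, and averaging gives `W(λK) - W((λK)_L) ≤ 2τ`
for every lattice. Integrating over the lattice parameters gives the expectation bound, once
`(ρ, s) ↦ W((λK)_L)` is known to be measurable; it is, being the spherical average of a countable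
supremum of continuous functions.
-/

section Lattice

variable {d : ℕ}

lemma norm_toEd_mulVec {ρ : Mat d} (hρ : ρ ∈ orthogonalGroup (Fin d) ℝ) (v : Fin d → ℝ) :
    ‖toEd d (ρ *ᵥ v)‖ = ‖toEd d v‖ := by
  have h : ⟪toEd d (ρ *ᵥ v), toEd d (ρ *ᵥ v)⟫ = ⟪toEd d v, toEd d v⟫ := by
    simp only [toEd, EuclideanSpace.inner_toLp_toLp, star_trivial]
    rw [dotProduct_mulVec, vecMul_mulVec,
      (mem_orthogonalGroup_iff' (Fin d) ℝ).mp hρ, vecMul_one]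
  simpa only [real_inner_self_eq_norm_sq, sq_eq_sq₀ (norm_nonneg _) (norm_nonneg _)] using h

lemma norm_toEd_le_of_abs_le_half {v : Fin d → ℝ} (hv : ∀ j, |v j| ≤ 1 / 2) :
    ‖toEd d v‖ ≤ √d / 2 := by
  have hsq : ‖toEd d v‖ ^ 2 ≤ (√d / 2) ^ 2 := by
    rw [EuclideanSpace.norm_sq_eq, div_pow, Real.sq_sqrt d.cast_nonneg]
    calc ∑ j, ‖toEd d v j‖ ^ 2 ≤ ∑ _j : Fin d, (1 / 2 : ℝ) ^ 2 :=
          Finset.sum_le_sum fun j _ => by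
            simpa [toEd] using pow_le_pow_left₀ (abs_nonneg _) (hv j) 2
      _ = d / 2 ^ 2 := by
        rw [Finset.sum_const, Finset.card_univ, Fintype.card_fin, nsmul_eq_mul]; ring
  exact pow_le_pow_iff_left₀ (norm_nonneg _) (by positivity) two_ne_zero |>.mp hsq

lemma exists_mem_lat_dist_le {ρ : Mat d} (hρ : ρ ∈ orthogonalGroup (Fin d) ℝ) (t y : Ed d) :
    ∃ z ∈ lat d ρ t, dist z y ≤ √d / 2 := by
  set w : Fin d → ℝ := ρᵀ *ᵥ y
  set ω : Fin d → ℤ := fun j => round (w j - t j)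
  refine ⟨_, ⟨ω, rfl⟩, ?_⟩
  have hy : y = toEd d (ρ *ᵥ w) := by
    rw [mulVec_mulVec, (mem_orthogonalGroup_iff (Fin d) ℝ).mp hρ, one_mulVec]; rfl
  have hsub : toEd d (ρ *ᵥ fun j => (ω j : ℝ) + t j) - y
      = toEd d (ρ *ᵥ fun j => (ω j : ℝ) + t j - w j) := by
    rw [hy]; ext j; simp only [toEd, PiLp.sub_apply, ← Pi.sub_apply, ← mulVec_sub]; rfl
  rw [dist_eq_norm, hsub, norm_toEd_mulVec hρ]
  refine norm_toEd_le_of_abs_le_half fun j => ?_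
  show |(round (w j - t j) : ℝ) + t j - w j| ≤ 1 / 2
  rw [← abs_neg, neg_sub, sub_add_eq_sub_sub, sub_right_comm]
  exact abs_sub_round (w j - t j)

lemma SOd_subset_orthogonalGroup : SOd d ⊆ orthogonalGroup (Fin d) ℝ :=
  fun _ hρ => (mem_orthogonalGroup_iff (Fin d) ℝ).mpr hρ.1

lemma exists_mem_inter_lat_of_closedBall_subset {C : Set (Ed d)} {c : Ed d} {r : ℝ}
    (hball : closedBall c r ⊆ C) (hr : √d / 2 ≤ r) {ρ : Mat d}
    (hρ : ρ ∈ orthogonalGroup (Fin d) ℝ) (t : Ed d) : (C ∩ lat d ρ t).Nonempty :=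
  let ⟨z, hzL, hz⟩ := exists_mem_lat_dist_le hρ t c
  ⟨z, hball (hz.trans hr), hzL⟩

end Lattice

lemma Convex.closedBall_add_smul_sub_subset {E : Type*} [NormedAddCommGroup E]
    [NormedSpace ℝ E] {C : Set E} (hC : Convex ℝ C) {x c : E} {r ε : ℝ} (hx : x ∈ C)
    (hball : closedBall c r ⊆ C) (hε : 0 ≤ ε) (hε₁ : ε ≤ 1) :
    closedBall (x + ε • (c - x)) (ε * r) ⊆ C := by
  rcases hε.eq_or_lt with rfl | hε
  · simpa using hx
  intro w hw
  set v := c + ε⁻¹ • (w - (x + ε • (c - x)))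
  have hv : v ∈ closedBall c r := by
    rw [mem_closedBall, dist_eq_norm, add_sub_cancel_left, norm_smul, norm_inv,
      Real.norm_of_nonneg hε.le, inv_mul_le_iff₀ hε, ← dist_eq_norm]
    exact hw
  have hw_eq : w = x + ε • (v - x) := by
    rw [show v - x = (c - x) + ε⁻¹ • (w - (x + ε • (c - x))) by simp only [v]; abel,
      smul_add, smul_smul, mul_inv_cancel₀ hε.ne', one_smul]
    abel
  rw [hw_eq]
  exact hC.add_smul_sub_mem hx (hball hv) ⟨hε.le, hε₁⟩

lemma smul_closedBall_of_nonneg {E : Type*} [NormedAddCommGroup E] [NormedSpace ℝ E]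
    {l r : ℝ} (hl : 0 ≤ l) (hr : 0 ≤ r) (x : E) :
    l • closedBall x r = closedBall (l • x) (l * r) := by
  rw [smul_closedBall _ _ hr, Real.norm_of_nonneg hl]

section SupportFunction

variable {d : ℕ} {S : Set (Ed d)} {M : ℝ} {u : Ed d}

lemma le_suppFn (hSM : S ⊆ closedBall 0 M) {x : Ed d} (hx : x ∈ S) :
    ⟪x, u⟫ ≤ suppFn d S u := by
  refine le_csSup ⟨M * ‖u‖, ?_⟩ (mem_image_of_mem _ hx)
  rintro - ⟨y, hy, rfl⟩
  have hyM : ‖y‖ ≤ M := mem_closedBall_zero_iff.mp (hSM hy)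
  exact (real_inner_le_norm y u).trans (by gcongr)

lemma suppFn_le (hS : S.Nonempty) {b : ℝ} (hb : ∀ x ∈ S, ⟪x, u⟫ ≤ b) :
    suppFn d S u ≤ b :=
  csSup_le (hS.image _) (forall_mem_image.mpr hb)

lemma abs_suppFn_le (hS : S.Nonempty) (hSM : S ⊆ closedBall 0 M) :
    |suppFn d S u| ≤ M * ‖u‖ := by
  obtain ⟨x, hx⟩ := hS
  have hxM : ‖x‖ ≤ M := mem_closedBall_zero_iff.mp (hSM hx)
  refine abs_le.mpr ⟨?_, suppFn_le ⟨x, hx⟩ fun y hy => ?_⟩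
  · have : -(‖x‖ * ‖u‖) ≤ ⟪x, u⟫ := neg_le_of_abs_le (abs_real_inner_le_norm x u)
    nlinarith [le_suppFn hSM hx (u := u), norm_nonneg u]
  · have hyM : ‖y‖ ≤ M := mem_closedBall_zero_iff.mp (hSM hy)
    exact (real_inner_le_norm y u).trans (by gcongr)

lemma suppFn_convexHull (hS : S.Nonempty) (hSM : S ⊆ closedBall 0 M) :
    suppFn d (convexHull ℝ S) = suppFn d S := by
  funext u
  have hhull : convexHull ℝ S ⊆ closedBall 0 M := convexHull_min hSM (convex_closedBall 0 M)
  refine le_antisymm (suppFn_le (hS.convexHull) fun x hx => ?_)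
    (suppFn_le hS fun x hx => le_suppFn hhull (subset_convexHull ℝ S hx))
  have hhalf : Convex ℝ {w : Ed d | ⟪w, u⟫ ≤ suppFn d S u} :=
    convex_halfSpace_le ⟨fun _ _ => inner_add_left _ _ _, fun _ _ => real_inner_smul_left _ _ _⟩ _
  exact convexHull_min (fun z hz => le_suppFn hSM hz) hhalf hx

lemma lipschitzWith_suppFn (hS : S.Nonempty) (hSM : S ⊆ closedBall 0 M) :
    LipschitzWith M.toNNReal (suppFn d S) := by
  refine LipschitzWith.of_le_add_mul' M fun v w => suppFn_le hS fun x hx => ?_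
  have hxM : ‖x‖ ≤ M := mem_closedBall_zero_iff.mp (hSM hx)
  have hsplit : ⟪x, v⟫ = ⟪x, w⟫ + ⟪x, v - w⟫ := by rw [← inner_add_right, add_sub_cancel]
  have hdiff : ⟪x, v - w⟫ ≤ M * dist v w :=
    (real_inner_le_norm _ _).trans (by rw [dist_eq_norm]; gcongr)
  linarith [le_suppFn hSM hx (u := w)]

lemma suppFn_le_suppFn_inter_add {C L : Set (Ed d)} {c : Ed d} {r δ : ℝ}
    (hC : Convex ℝ C) (hCM : C ⊆ closedBall 0 M) (hball : closedBall c r ⊆ C) (hr : 0 < r)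
    (hδ : 0 ≤ δ) (hδr : δ ≤ r) (hL : ∀ y, ∃ z ∈ L, dist z y ≤ δ) (hu : ‖u‖ = 1) :
    suppFn d C u ≤ suppFn d (C ∩ L) u + δ * (1 + 2 * M / r) := by
  have hc : c ∈ C := hball (mem_closedBall_self hr.le)
  refine suppFn_le ⟨c, hc⟩ fun x hx => ?_
  set ε := δ / r
  have hεr : ε * r = δ := div_mul_cancel₀ δ hr.ne'
  obtain ⟨z, hzL, hz⟩ := hL (x + ε • (c - x))
  have hzC : z ∈ C := hC.closedBall_add_smul_sub_subset hx hball (div_nonneg hδ hr.le)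
    ((div_le_one hr).mpr hδr) (by rw [hεr]; exact hz)
  have hnear : ⟪x + ε • (c - x) - z, u⟫ ≤ δ := by
    refine (real_inner_le_norm _ _).trans ?_
    rw [hu, mul_one, ← dist_eq_norm, dist_comm]
    exact hz
  have hfar : ⟪x - c, u⟫ ≤ 2 * M := by
    refine (real_inner_le_norm _ _).trans ?_
    rw [hu, mul_one]
    linarith [norm_sub_le x c, mem_closedBall_zero_iff.mp (hCM hx),
      mem_closedBall_zero_iff.mp (hCM hc)]
  have hexpand : ⟪x, u⟫ = ⟪x + ε • (c - x) - z, u⟫ + ⟪z, u⟫ + ε * ⟪x - c, u⟫ := by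
    simp only [inner_sub_left, inner_add_left, real_inner_smul_left]; ring
  have hε2M : ε * ⟪x - c, u⟫ ≤ δ * (2 * M / r) := by
    calc ε * ⟪x - c, u⟫ ≤ ε * (2 * M) := by gcongr
      _ = δ * (2 * M / r) := by ring
  linarith [le_suppFn (inter_subset_left.trans hCM) ⟨hzC, hzL⟩ (u := u)]

end SupportFunction

section MeanWidth

variable {d : ℕ} {S T : Set (Ed d)} {M : ℝ}

instance : IsFiniteMeasure (sphereμ d) := by
  unfold sphereμ; infer_instance

lemma integrable_suppFn (hS : S.Nonempty) (hSM : S ⊆ closedBall 0 M) :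
    Integrable (fun u : sphere (0 : Ed d) 1 => suppFn d S u) (sphereμ d) :=
  Integrable.of_bound ((lipschitzWith_suppFn hS hSM).continuous.comp
    continuous_subtype_val).aestronglyMeasurable M
    (ae_of_all _ fun u => by simpa using abs_suppFn_le hS hSM (u := u))

lemma two_div_ωd_mul_integral_le {f : sphere (0 : Ed d) 1 → ℝ} (hf : Integrable f (sphereμ d))
    {c : ℝ} (hc : 0 ≤ c) (hfc : ∀ u, f u ≤ c) : 2 / ωd d * ∫ u, f u ∂(sphereμ d) ≤ 2 * c := by
  have hint : ∫ u, f u ∂(sphereμ d) ≤ ωd d * c := by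
    calc ∫ u, f u ∂(sphereμ d) ≤ ∫ _, c ∂(sphereμ d) :=
          integral_mono hf (integrable_const c) hfc
      _ = ωd d * c := by rw [integral_const, smul_eq_mul, measureReal_def]; rfl
  calc 2 / ωd d * ∫ u, f u ∂(sphereμ d) ≤ 2 / ωd d * (ωd d * c) := by
        gcongr; exact div_nonneg zero_le_two ENNReal.toReal_nonneg
    _ = 2 * c * (ωd d / ωd d) := by ring
    _ ≤ 2 * c := mul_le_of_le_one_right (by positivity) (div_self_le_one _)

lemma abs_meanWidth_le (hS : S.Nonempty) (hSM : S ⊆ closedBall 0 M) :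
    |meanWidth d S| ≤ 2 * M := by
  have hM : 0 ≤ M := hS.elim fun x hx => (norm_nonneg x).trans (mem_closedBall_zero_iff.mp (hSM hx))
  have hbound (u : sphere (0 : Ed d) 1) : |suppFn d S u| ≤ M := by
    simpa using abs_suppFn_le hS hSM (u := u)
  have hint := integrable_suppFn hS hSM
  refine abs_le.mpr ⟨?_, two_div_ωd_mul_integral_le hint hM fun u => (abs_le.mp (hbound u)).2⟩
  have hneg : 2 / ωd d * ∫ u, -suppFn d S u ∂(sphereμ d) ≤ 2 * M :=
    two_div_ωd_mul_integral_le hint.neg hM fun u => neg_le.mp (abs_le.mp (hbound u)).1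
  rw [integral_neg, mul_neg] at hneg
  rw [meanWidth]
  linarith

lemma meanWidth_convexHull (hS : S.Nonempty) (hSM : S ⊆ closedBall 0 M) :
    meanWidth d (convexHull ℝ S) = meanWidth d S := by
  rw [meanWidth, meanWidth, suppFn_convexHull hS hSM]

lemma meanWidth_sub_le_of_suppFn_le (hS : S.Nonempty) (hSM : S ⊆ closedBall 0 M)
    (hT : T.Nonempty) (hTM : T ⊆ closedBall 0 M) {c : ℝ} (hc : 0 ≤ c)
    (hST : ∀ u : Ed d, ‖u‖ = 1 → suppFn d S u ≤ suppFn d T u + c) :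
    meanWidth d S - meanWidth d T ≤ 2 * c := by
  have hint := (integrable_suppFn hS hSM).sub (integrable_suppFn hT hTM)
  rw [meanWidth, meanWidth, ← mul_sub, ← integral_sub (integrable_suppFn hS hSM)
    (integrable_suppFn hT hTM)]
  exact two_div_ωd_mul_integral_le hint hc fun u => sub_le_iff_le_add'.mpr (hST u (by simp))

lemma meanWidth_sub_meanWidth_convexHull_inter_lat_le {C : Set (Ed d)} {c : Ed d} {r : ℝ}
    (hC : Convex ℝ C) (hCM : C ⊆ closedBall 0 M) (hball : closedBall c r ⊆ C) (hr : 0 < r)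
    (hdr : √d / 2 ≤ r) {ρ : Mat d} (hρ : ρ ∈ orthogonalGroup (Fin d) ℝ) (t : Ed d) :
    meanWidth d C - meanWidth d (convexHull ℝ (C ∩ lat d ρ t))
      ≤ 2 * (√d / 2 * (1 + 2 * M / r)) := by
  have hc : c ∈ C := hball (mem_closedBall_self hr.le)
  have hM : 0 ≤ M := (norm_nonneg c).trans (mem_closedBall_zero_iff.mp (hCM hc))
  have hne := exists_mem_inter_lat_of_closedBall_subset hball hdr hρ t
  have hneM : C ∩ lat d ρ t ⊆ closedBall 0 M := inter_subset_left.trans hCM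
  rw [meanWidth_convexHull hne hneM]
  exact meanWidth_sub_le_of_suppFn_le ⟨c, hc⟩ hCM hne hneM (by positivity) fun u hu =>
    suppFn_le_suppFn_inter_add hC hCM hball hr (by positivity) hdr
      (exists_mem_lat_dist_le hρ t) hu

end MeanWidth

section RandomLattice

variable {d : ℕ}

instance : OpensMeasurableSpace (Mat d) :=
  inferInstanceAs (OpensMeasurableSpace (Fin d → Fin d → ℝ))

def latPt (d : ℕ) (ω : Fin d → ℤ) (p : Mat d × Ed d) : Ed d :=
  toEd d (p.1 *ᵥ fun j => (ω j : ℝ) + p.2 j)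

lemma continuous_latPt (ω : Fin d → ℤ) : Continuous (latPt d ω) := by
  unfold latPt toEd
  fun_prop

/-- Points outside `C` contribute `-M`, which lies below every value of the support function
of `C ∩ lat d ρ t` on unit vectors when `C ⊆ B(0, M)`; so this countable supremum is a
measurable formula for that support function. -/
def latSuppFn (d : ℕ) (C : Set (Ed d)) (M : ℝ) (q : (Mat d × Ed d) × Ed d) : ℝ :=
  ⨆ ω : Fin d → ℤ, open scoped Classical in
    if latPt d ω q.1 ∈ C then ⟪latPt d ω q.1, q.2⟫ else -M

lemma measurable_latSuppFn {C : Set (Ed d)} (hC : IsClosed C) (M : ℝ) :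
    Measurable (latSuppFn d C M) :=
  Measurable.iSup fun ω => Measurable.ite
    (hC.measurableSet.preimage ((continuous_latPt ω).comp continuous_fst).measurable)
    (((continuous_latPt ω).comp continuous_fst).inner continuous_snd).measurable
    measurable_const

lemma latSuppFn_eq {C : Set (Ed d)} {M : ℝ} (hCM : C ⊆ closedBall 0 M) {p : Mat d × Ed d}
    (hne : (C ∩ lat d p.1 p.2).Nonempty) {u : Ed d} (hu : ‖u‖ = 1) :
    latSuppFn d C M (p, u) = suppFn d (C ∩ lat d p.1 p.2) u := by
  classical
  have hSM : C ∩ lat d p.1 p.2 ⊆ closedBall 0 M := inter_subset_left.trans hCM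
  obtain ⟨x₀, hx₀⟩ := hne
  have hterm (ω : Fin d → ℤ) : (if latPt d ω p ∈ C then ⟪latPt d ω p, u⟫ else -M)
      ≤ suppFn d (C ∩ lat d p.1 p.2) u := by
    split_ifs with h
    · exact le_suppFn hSM ⟨h, ω, rfl⟩
    · have hx₀M : ‖x₀‖ ≤ M := mem_closedBall_zero_iff.mp (hSM hx₀)
      have : -(‖x₀‖ * ‖u‖) ≤ ⟪x₀, u⟫ := neg_le_of_abs_le (abs_real_inner_le_norm x₀ u)
      rw [hu, mul_one] at this
      linarith [le_suppFn hSM hx₀ (u := u)]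
  refine le_antisymm (ciSup_le hterm) (suppFn_le ⟨x₀, hx₀⟩ ?_)
  rintro x ⟨hxC, ω, rfl⟩
  refine le_trans (le_of_eq ?_) (le_ciSup ⟨_, forall_mem_range.mpr hterm⟩ ω)
  exact (if_pos hxC).symm

lemma aestronglyMeasurable_meanWidth_convexHull_inter_lat {C : Set (Ed d)} {M : ℝ}
    (hC : IsClosed C) (hCM : C ⊆ closedBall 0 M) {P : Measure (Mat d × Ed d)}
    (hne : ∀ᵐ p ∂P, (C ∩ lat d p.1 p.2).Nonempty) :
    AEStronglyMeasurable (fun p => meanWidth d (convexHull ℝ (C ∩ lat d p.1 p.2))) P := by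
  have hmeas : Measurable fun p : Mat d × Ed d =>
      2 / ωd d * ∫ u : sphere (0 : Ed d) 1, latSuppFn d C M (p, u) ∂(sphereμ d) :=
    have hq : Measurable fun q : (Mat d × Ed d) × sphere (0 : Ed d) 1 =>
        latSuppFn d C M (q.1, q.2) :=
      (measurable_latSuppFn hC M).comp
        (measurable_fst.prodMk (measurable_subtype_coe.comp measurable_snd))
    measurable_const.mul hq.stronglyMeasurable.integral_prod_right'.measurable
  refine hmeas.aestronglyMeasurable.congr (hne.mono fun p hp => ?_)
  dsimp only
  rw [meanWidth_convexHull hp (inter_subset_left.trans hCM), meanWidth]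
  congr 1
  exact integral_congr_ae (ae_of_all _ fun u => latSuppFn_eq hCM hp (by simp))

lemma volume_cube : volume (cube d) = 1 := by
  have hcube : cube d = (MeasurableEquiv.toLp 2 (Fin d → ℝ)).symm ⁻¹' univ.pi fun _ => Ico 0 1 := by
    ext t
    simp [cube, Set.mem_pi]
  rw [hcube, (EuclideanSpace.volume_preserving_symm_measurableEquiv_toLp (Fin d)).measure_preimage
    (MeasurableSet.univ_pi fun _ => measurableSet_Ico).nullMeasurableSet, volume_pi_pi]
  simp

instance {μ : Measure (Mat d)} [IsProbabilityMeasure μ] :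
    IsProbabilityMeasure (latticeParamMeasure d μ) := by
  have : IsProbabilityMeasure (volume.restrict (cube d)) := ⟨by simp [volume_cube]⟩
  unfold latticeParamMeasure
  infer_instance

lemma meanWidth_sub_expMeanWidthHull_le {M : ℝ} {C : Set (Ed d)} {c : Ed d} {r : ℝ}
    (hCcl : IsClosed C) (hC : Convex ℝ C) (hCM : C ⊆ closedBall 0 M)
    (hball : closedBall c r ⊆ C) (hr : 0 < r) (hdr : √d / 2 ≤ r) {μ : Measure (Mat d)}
    [IsProbabilityMeasure μ] (hμ : ∀ᵐ ρ ∂μ, ρ ∈ orthogonalGroup (Fin d) ℝ) :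
    meanWidth d C - expMeanWidthHull d μ C ≤ 2 * (√d / 2 * (1 + 2 * M / r)) := by
  have hρ : ∀ᵐ p ∂(latticeParamMeasure d μ), p.1 ∈ orthogonalGroup (Fin d) ℝ :=
    Measure.quasiMeasurePreserving_fst.ae hμ
  have hne := hρ.mono fun p hp => exists_mem_inter_lat_of_closedBall_subset hball hdr hp p.2
  have hbound : ∀ᵐ p ∂(latticeParamMeasure d μ),
      ‖meanWidth d (convexHull ℝ (C ∩ lat d p.1 p.2))‖ ≤ 2 * M := hne.mono fun p hp => by
    rw [meanWidth_convexHull hp (inter_subset_left.trans hCM), Real.norm_eq_abs]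
    exact abs_meanWidth_le hp (inter_subset_left.trans hCM)
  have hint := Integrable.of_bound
    (aestronglyMeasurable_meanWidth_convexHull_inter_lat hCcl hCM hne) _ hbound
  have hlower := integral_mono_ae (integrable_const _) hint (hρ.mono fun p hp =>
    sub_le_comm.mp (meanWidth_sub_meanWidth_convexHull_inter_lat_le hC hCM hball hr hdr hp p.2))
  rw [integral_const, probReal_univ, one_smul] at hlower
  rw [expMeanWidthHull]
  linarith

end RandomLattice

/-- **Theorem (general upper bound).** For a convex body `K ⊆ ℝ^d` there are
`τ(K), λ(K) > 0` such that for `λ ≥ λ(K)`: `W(λK) - E[W((λK)_L)] ≤ 2τ(K)`, and moreover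
`W(λK) - W((λK)_L) ≤ 2τ(K)` for every individual lattice `L = ρ(ℤ^d + s)`. -/
theorem mean_width_difference_le_two_tau (d : ℕ) (hd : 2 ≤ d)
    (K : Set (Ed d)) (hK : IsConvexBody d K) :
    ∃ τ lam₀ : ℝ, 0 < τ ∧ 0 < lam₀ ∧
      (∀ μ : Measure (Mat d), IsHaarSO d μ →
        ∀ l : ℝ, lam₀ ≤ l →
          meanWidth d (l • K) - expMeanWidthHull d μ (l • K) ≤ 2 * τ) ∧
      (∀ l : ℝ, lam₀ ≤ l →
        ∀ ρ ∈ SOd d, ∀ s : Ed d,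
          meanWidth d (l • K) -
              meanWidth d (convexHull ℝ ((l • K) ∩ lat d ρ s)) ≤ 2 * τ) := by
  obtain ⟨hKc, hKconv, x₀, hx₀⟩ := hK
  obtain ⟨r, hr, hball⟩ := nhds_basis_closedBall.mem_iff.mp (mem_interior_iff_mem_nhds.mp hx₀)
  obtain ⟨R, hKR⟩ := hKc.isBounded.subset_closedBall 0
  have hR : 0 ≤ R := (norm_nonneg x₀).trans (mem_closedBall_zero_iff.mp (hKR (interior_subset hx₀)))
  have hδ : 0 < √d / 2 := half_pos (Real.sqrt_pos.mpr (by norm_cast; omega))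
  have hscaled (l : ℝ) (hl : √d / 2 / r ≤ l) : √d / 2 ≤ l * r ∧ l • K ⊆ closedBall 0 (l * R) ∧
      closedBall (l • x₀) (l * r) ⊆ l • K ∧ 2 * (l * R) / (l * r) = 2 * R / r := by
    have hl₀ : 0 < l := (div_pos hδ hr).trans_le hl
    refine ⟨(div_le_iff₀ hr).mp hl, ?_, ?_, by field_simp⟩
    · simpa [smul_closedBall_of_nonneg hl₀.le hR] using smul_set_mono (a := l) hKR
    · simpa [smul_closedBall_of_nonneg hl₀.le hr.le] using smul_set_mono (a := l) hball
  refine ⟨√d / 2 * (1 + 2 * R / r), √d / 2 / r, by positivity, by positivity, ?_, ?_⟩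
  · intro μ hμ l hl
    obtain ⟨hlr, hlKR, hlball, hratio⟩ := hscaled l hl
    have : IsProbabilityMeasure μ := hμ.1
    rw [← hratio]
    exact meanWidth_sub_expMeanWidthHull_le (hKc.smul l).isClosed (hKconv.smul l) hlKR hlball
      (hδ.trans_le hlr) hlr
      (measure_mono_null (fun ρ hρ => mt (SOd_subset_orthogonalGroup ·) hρ) hμ.2.1)
  · intro l hl ρ hρ s
    obtain ⟨hlr, hlKR, hlball, hratio⟩ := hscaled l hl
    rw [← hratio]
    exact meanWidth_sub_meanWidth_convexHull_inter_lat_le (hKconv.smul l) hlKR hlball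
      (hδ.trans_le hlr) hlr (SOd_subset_orthogonalGroup hρ) s
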